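/- Let k > 1, let M ⊆ Δ^k be nonempty, let q be an element of the convex hull of M, and let v ∈ ℕ with v ≥ 1. Then there exist b_1, …, b_v ∈ M such that ‖q − (1/v)∑_{i=1}^v b_i‖ ≤ 4(k+1)/v, where ‖·‖ is the Euclidean norm on ℝ^k. -/

import Mathlib

open MeasureTheory Filter Topology

noncomputable section

/-- The set of probability vectors over a finite set `Ω`, i.e. the standard simplex
inside the Euclidean space `ℝ^Ω`. -/
def probVec (Ω : Type*) [Fintype Ω] : Set (EuclideanSpace ℝ Ω) :=
  {p | (∀ x, 0 ≤ p x) ∧ ∑ x, p x = 1}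

/-- The relative-frequency vector of the first `n` terms of `ω`. -/
def relFreq {Ω : Type*} [Fintype Ω] [DecidableEq Ω] (ω : ℕ → Ω) (n : ℕ) :
    EuclideanSpace ℝ Ω :=
  WithLp.toLp 2 (fun x => (((Finset.range n).filter fun i => ω i = x).card : ℝ) / n)

/-- The set of cluster points of a sequence in a topological space. -/
def clusterPts {X : Type*} [TopologicalSpace X] (a : ℕ → X) : Set X :=
  {c | MapClusterPt c atTop a}

/-- Cesàro averages of a sequence of vectors. -/
def cesaro {Ω : Type*} [Fintype Ω] (m : ℕ → EuclideanSpace ℝ Ω) (n : ℕ) :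
    EuclideanSpace ℝ Ω :=
  (n : ℝ)⁻¹ • ∑ i ∈ Finset.range n, m i

/-- `μ` is the infinite (Ionescu-Tulcea) independent product of the probability vectors `m i`,
characterized by its values on cylinder sets. -/
def IsIT {Ω : Type*} [Fintype Ω] [MeasurableSpace Ω] (m : ℕ → EuclideanSpace ℝ Ω)
    (μ : Measure (ℕ → Ω)) : Prop :=
  ∀ (n : ℕ) (x : Fin n → Ω),
    μ {ω | ∀ i : Fin n, ω (i : ℕ) = x i} = ∏ i : Fin n, ENNReal.ofReal (m i.val (x i))

end

/-! Carathéodory writes `q` as a convex combination `∑ wᵢ zᵢ` of at most `k + 1` affinely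
independent points of `M`. Rounding the numbers `v wᵢ` to naturals `nᵢ` with `∑ nᵢ = v` costs at most
`2 (k + 1)` in `ℓ¹`, and points of the simplex have norm at most `1`, so the average of the
multiset with `nᵢ` copies of `zᵢ` is within `2 (k + 1) / v` of `q`. -/

lemma norm_le_one_of_mem_probVec {Ω : Type*} [Fintype Ω] {p : EuclideanSpace ℝ Ω}
    (hp : p ∈ probVec Ω) : ‖p‖ ≤ 1 := by
  obtain ⟨hp0, hp1⟩ := hp
  rw [EuclideanSpace.norm_eq, Real.sqrt_le_one]
  calc ∑ x, ‖p x‖ ^ 2 = ∑ x, p x ^ 2 := by simp only [Real.norm_eq_abs, sq_abs]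
    _ ≤ (∑ x, p x) ^ 2 := Finset.sum_sq_le_sq_sum_of_nonneg fun x _ => hp0 x
    _ = 1 := by rw [hp1, one_pow]

/-- Rounding down every coordinate loses less than `card ι` in total; giving the whole deficit to
a single coordinate at most doubles the `ℓ¹` error. -/
lemma exists_nat_sum_eq_sum_abs_sub_le {ι : Type*} [Fintype ι] {x : ι → ℝ} (hx : ∀ i, 0 ≤ x i)
    {v : ℕ} (hxv : ∑ i, x i = v) :
    ∃ n : ι → ℕ, ∑ i, n i = v ∧ ∑ i, |x i - n i| ≤ 2 * Fintype.card ι := by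
  classical
  rcases isEmpty_or_nonempty ι with hι | ⟨⟨i₀⟩⟩
  · refine ⟨0, ?_, by simp⟩
    simp only [Finset.univ_eq_empty, Finset.sum_empty] at hxv ⊢
    exact_mod_cast hxv
  set S := ∑ i, ⌊x i⌋₊
  have hS : (S : ℝ) ≤ v := by
    rw [← hxv]; push_cast [S]; exact Finset.sum_le_sum fun i _ => Nat.floor_le (hx i)
  have hvS : (v : ℝ) < S + Fintype.card ι := by
    rw [← hxv, Finset.card_univ.symm, Finset.card_eq_sum_ones]; push_cast [S]
    rw [← Finset.sum_add_distrib]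
    exact Finset.sum_lt_sum_of_nonempty ⟨i₀, Finset.mem_univ _⟩ fun i _ => Nat.lt_floor_add_one _
  have hSv : S ≤ v := by exact_mod_cast hS
  refine ⟨fun i => ⌊x i⌋₊ + (Pi.single i₀ (v - S) : ι → ℕ) i, ?_, ?_⟩
  · rw [Finset.sum_add_distrib, Fintype.sum_pi_single']; omega
  · calc ∑ i, |x i - ↑(⌊x i⌋₊ + (Pi.single i₀ (v - S) : ι → ℕ) i)|
        ≤ ∑ i, ((x i - ⌊x i⌋₊) + (Pi.single i₀ (v - S) : ι → ℕ) i) := by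
          refine Finset.sum_le_sum fun i _ => ?_
          rw [Nat.cast_add, ← sub_sub]
          refine (abs_sub _ _).trans (add_le_add (abs_of_nonneg ?_).le (abs_of_nonneg ?_).le)
          · exact sub_nonneg.2 (Nat.floor_le (hx i))
          · positivity
      _ = 2 * (v - S) := by
          rw [Finset.sum_add_distrib, Finset.sum_sub_distrib, hxv,
            ← Nat.cast_sum (f := fun i => (Pi.single i₀ (v - S) : ι → ℕ) i),
            Fintype.sum_pi_single', Nat.cast_sub hSv]
          push_cast [S]; ring
      _ ≤ 2 * Fintype.card ι := by linarith

lemma exists_fin_sum_eq_sum_nsmul {ι M : Type*} [Fintype ι] [AddCommMonoid M] (z : ι → M)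
    {n : ι → ℕ} {v : ℕ} (hn : ∑ i, n i = v) : ∃ b : Fin v → ι, ∑ j, z (b j) = ∑ i, n i • z i := by
  subst hn
  have e : (Σ i, Fin (n i)) ≃ Fin (∑ i, n i) := Fintype.equivFinOfCardEq (by simp)
  refine ⟨fun j => (e.symm j).1, ?_⟩
  rw [Fintype.sum_equiv e.symm _ (fun p => z p.1) fun _ => rfl, Fintype.sum_sigma]
  simp

lemma norm_sum_smul_le_sum_abs {ι E : Type*} [Fintype ι] [SeminormedAddCommGroup E]
    [NormedSpace ℝ E] (a : ι → ℝ) {z : ι → E} (hz : ∀ i, ‖z i‖ ≤ 1) :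
    ‖∑ i, a i • z i‖ ≤ ∑ i, |a i| :=
  (norm_sum_le _ _).trans <| Finset.sum_le_sum fun i _ => by
    rw [norm_smul, Real.norm_eq_abs]
    exact mul_le_of_le_one_right (abs_nonneg _) (hz i)

theorem stmt17_general (k : ℕ)
    (M : Set (EuclideanSpace ℝ (Fin k))) (hMsub : M ⊆ probVec (Fin k))
    (q : EuclideanSpace ℝ (Fin k)) (hq : q ∈ convexHull ℝ M)
    (v : ℕ) (hv : 1 ≤ v) :
    ∃ b : Fin v → EuclideanSpace ℝ (Fin k), (∀ i, b i ∈ M) ∧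
      ‖q - (v : ℝ)⁻¹ • ∑ i, b i‖ ≤ 4 * ((k : ℝ) + 1) / v := by
  obtain ⟨ι, _, z, w, hzM, hz, hw0, hw1, rfl⟩ := eq_pos_convex_span_of_mem_convexHull hq
  have hcard : Fintype.card ι ≤ k + 1 := hz.card_le_finrank_succ.trans <| by
    simpa using (vectorSpan ℝ (Set.range z)).finrank_le
  have hv0 : (0 : ℝ) < v := by exact_mod_cast hv
  obtain ⟨n, hnv, hn⟩ := exists_nat_sum_eq_sum_abs_sub_le (x := fun i => v * w i)
    (fun i => mul_nonneg v.cast_nonneg (hw0 i).le) (by rw [← Finset.mul_sum, hw1, mul_one])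
  obtain ⟨b, hb⟩ := exists_fin_sum_eq_sum_nsmul z hnv
  refine ⟨z ∘ b, fun j => hzM ⟨b j, rfl⟩, ?_⟩
  have herr : ∑ i, w i • z i - (v : ℝ)⁻¹ • ∑ j, z (b j)
      = (v : ℝ)⁻¹ • ∑ i, (v * w i - n i) • z i := by
    rw [hb, Finset.smul_sum, Finset.smul_sum, ← Finset.sum_sub_distrib]
    refine Finset.sum_congr rfl fun i _ => ?_
    rw [← Nat.cast_smul_eq_nsmul ℝ]
    match_scalars
    field_simp
  calc ‖∑ i, w i • z i - (v : ℝ)⁻¹ • ∑ j, (z ∘ b) j‖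
      ≤ (v : ℝ)⁻¹ * (2 * Fintype.card ι) := by
        rw [Function.comp_def, herr, norm_smul, Real.norm_of_nonneg (by positivity)]
        gcongr
        exact (norm_sum_smul_le_sum_abs _ fun i => norm_le_one_of_mem_probVec
          (hMsub (hzM ⟨i, rfl⟩))).trans hn
    _ ≤ 4 * ((k : ℝ) + 1) / v := by
        have : (Fintype.card ι : ℝ) ≤ k + 1 := by exact_mod_cast hcard
        rw [inv_mul_eq_div]
        gcongr
        norm_num

/-- **Approximation lemma.** Any point of the convex hull of `M ⊆ Δ^k` can be
approximated to within `4(k+1)/v` in Euclidean norm by the average of `v` points of `M`. -/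
theorem stmt17 (k : ℕ) (hk : 1 < k)
    (M : Set (EuclideanSpace ℝ (Fin k))) (hM : M.Nonempty) (hMsub : M ⊆ probVec (Fin k))
    (q : EuclideanSpace ℝ (Fin k)) (hq : q ∈ convexHull ℝ M)
    (v : ℕ) (hv : 1 ≤ v) :
    ∃ b : Fin v → EuclideanSpace ℝ (Fin k), (∀ i, b i ∈ M) ∧
      ‖q - (v : ℝ)⁻¹ • ∑ i, b i‖ ≤ 4 * ((k : ℝ) + 1) / v :=
  stmt17_general k M hMsub q hq v hv
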